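/- For the distribution D_{n,m} on the (5m+1)×(2n+1) grid placing 3 pebbles on every second vertex of every fifth row (rows 0,5,10,...,5m; columns 0,2,...,2n), every vertex of the grid has weight at least 1. -/

import Mathlib

/-!
Grid distance is at most Manhattan distance, since the grid is the box product of two paths.
Hence a pebbled row at row distance `k` from `u` contributes at least `3 · 2⁻ᵏ` to its weight:
if `u` is in an even column through the pile in that column at distance `k`, otherwise through
the two piles in the neighbouring columns at distance `k + 1`. Every vertex lies in a pebbled
row or strictly between the consecutive pebbled rows `5q` and `5q + 5`, at row distances `a` and
`5 - a` with `0 < a < 5`, so its weight is at least `3` or `3 · 2⁻ᵃ + 3 · 2⁻⁽⁵⁻ᵃ⁾ ≥ 9/8`.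
-/

def fgrid (r c : ℕ) : SimpleGraph (Fin r × Fin c) where
  Adj p q := ((p.1 : ℤ) - q.1).natAbs + ((p.2 : ℤ) - q.2).natAbs = 1
  symm := ⟨by intro p q h; omega⟩
  loopless := ⟨by intro p h; simp at h⟩


open SimpleGraph Finset

namespace SimpleGraph

variable {α β : Type*} {G : SimpleGraph α} {H : SimpleGraph β}

lemma Reachable.dist_boxProd {x y : α × β} (h₁ : G.Reachable x.1 y.1)
    (h₂ : H.Reachable x.2 y.2) :
    (G □ H).dist x y = G.dist x.1 y.1 + H.dist x.2 y.2 := by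
  have h : (G □ H).Reachable x y := reachable_boxProd.2 ⟨h₁, h₂⟩
  apply Nat.cast_injective (R := ℕ∞)
  rw [Nat.cast_add, h.coe_dist_eq_edist, h₁.coe_dist_eq_edist, h₂.coe_dist_eq_edist,
    edist_boxProd]

lemma pathGraph_exists_walk_length_eq {n : ℕ} :
    ∀ (k : ℕ) (a b : Fin n), a.val + k = b.val → ∃ p : (pathGraph n).Walk a b, p.length = k
  | 0, a, b, h => ⟨Walk.nil.copy rfl (Fin.ext h), by simp⟩
  | k + 1, a, b, h => by
    obtain ⟨p, hp⟩ := pathGraph_exists_walk_length_eq k ⟨a + 1, by omega⟩ b (by simp; omega)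
    exact ⟨.cons (pathGraph_adj.2 (.inl rfl)) p, by simp [hp]⟩

lemma pathGraph_dist_le {n : ℕ} (a b : Fin n) :
    (pathGraph n).dist a b ≤ ((a : ℤ) - b).natAbs := by
  wlog hab : a ≤ b generalizing a b
  · rw [dist_comm]
    exact (this b a (le_of_not_ge hab)).trans_eq (by omega)
  obtain ⟨p, hp⟩ := pathGraph_exists_walk_length_eq (b - a : ℕ) a b (by omega)
  exact (dist_le p).trans (by omega)

end SimpleGraph

lemma fgrid_eq_boxProd (r c : ℕ) : fgrid r c = pathGraph r □ pathGraph c := by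
  ext u v
  simp only [fgrid, boxProd_adj, pathGraph_adj, Fin.ext_iff]
  omega

lemma fgrid_dist_le {r c : ℕ} (u v : Fin r × Fin c) :
    (fgrid r c).dist u v ≤ ((u.1 : ℤ) - v.1).natAbs + ((u.2 : ℤ) - v.2).natAbs := by
  rw [fgrid_eq_boxProd, Reachable.dist_boxProd (pathGraph_preconnected _ _ _)
    (pathGraph_preconnected _ _ _)]
  exact add_le_add (pathGraph_dist_le _ _) (pathGraph_dist_le _ _)

section Weight

variable {r c : ℕ} {D : Fin r × Fin c → ℕ} (u : Fin r × Fin c)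

lemma three_mul_half_pow_le_of_dist {v : Fin r × Fin c} {k : ℕ} (hv : 3 ≤ D v)
    (hk : ((u.1 : ℤ) - v.1).natAbs + ((u.2 : ℤ) - v.2).natAbs ≤ k) :
    3 * (1 / 2 : ℝ) ^ k ≤ D v * (1 / 2) ^ ((fgrid r c).dist u v) :=
  mul_le_mul (by exact_mod_cast hv)
    (pow_le_pow_of_le_one (by norm_num) (by norm_num) ((fgrid_dist_le u v).trans hk))
    (by positivity) (by positivity)

lemma three_mul_half_pow_le_sum_row (hc : Odd c) (i : Fin r)
    (hi : ∀ j : Fin c, Even j.val → 3 ≤ D (i, j)) :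
    3 * (1 / 2 : ℝ) ^ ((u.1 : ℤ) - i).natAbs ≤
      ∑ j, (D (i, j) : ℝ) * (1 / 2) ^ ((fgrid r c).dist u (i, j)) := by
  set k := ((u.1 : ℤ) - i).natAbs
  rcases Nat.even_or_odd u.2.val with he | ho
  · calc 3 * (1 / 2 : ℝ) ^ k ≤ D (i, u.2) * (1 / 2) ^ ((fgrid r c).dist u (i, u.2)) :=
          three_mul_half_pow_le_of_dist u (hi _ he) (by simp [k])
      _ ≤ _ := single_le_sum (f := fun j ↦ (D (i, j) : ℝ) * (1 / 2) ^ ((fgrid r c).dist u (i, j)))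
          (fun j _ ↦ by positivity) (mem_univ u.2)
  · obtain ⟨t, ht⟩ := ho
    obtain ⟨s, hs⟩ := hc
    have hu2 := u.2.isLt
    let jl : Fin c := ⟨u.2 - 1, by omega⟩
    let jr : Fin c := ⟨u.2 + 1, by omega⟩
    have hlr : jl ≠ jr := by simp [jl, jr, Fin.ext_iff]
    calc 3 * (1 / 2 : ℝ) ^ k = 3 * (1 / 2) ^ (k + 1) + 3 * (1 / 2) ^ (k + 1) := by ring
      _ ≤ D (i, jl) * (1 / 2) ^ ((fgrid r c).dist u (i, jl)) +
          D (i, jr) * (1 / 2) ^ ((fgrid r c).dist u (i, jr)) :=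
        add_le_add (three_mul_half_pow_le_of_dist u (hi jl ⟨t, by simp [jl]; omega⟩)
            (by simp [k, jl]; omega))
          (three_mul_half_pow_le_of_dist u (hi jr ⟨t + 1, by simp [jr]; omega⟩)
            (by simp [k, jr]))
      _ = ∑ j ∈ {jl, jr}, (D (i, j) : ℝ) * (1 / 2) ^ ((fgrid r c).dist u (i, j)) :=
        (sum_pair (f := fun j ↦ (D (i, j) : ℝ) * (1 / 2) ^ ((fgrid r c).dist u (i, j))) hlr).symm
      _ ≤ _ := sum_le_sum_of_subset_of_nonneg (subset_univ _) (fun _ _ _ ↦ by positivity)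

lemma sum_three_mul_half_pow_le_weight (hc : Odd c) (S : Finset (Fin r))
    (hS : ∀ i ∈ S, ∀ j : Fin c, Even j.val → 3 ≤ D (i, j)) :
    ∑ i ∈ S, 3 * (1 / 2 : ℝ) ^ ((u.1 : ℤ) - i).natAbs ≤
      ∑ v, (D v : ℝ) * (1 / 2) ^ ((fgrid r c).dist u v) := by
  rw [Fintype.sum_prod_type]
  calc _ ≤ ∑ i ∈ S, ∑ j, (D (i, j) : ℝ) * (1 / 2) ^ ((fgrid r c).dist u (i, j)) :=
        sum_le_sum fun i hi ↦ three_mul_half_pow_le_sum_row u hc i (hS i hi)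
    _ ≤ _ := sum_le_sum_of_subset_of_nonneg (subset_univ _) (fun _ _ _ ↦ by positivity)

end Weight

lemma one_le_three_mul_half_pow_add {a : ℕ} (h0 : 0 < a) (h5 : a < 5) :
    1 ≤ 3 * (1 / 2 : ℝ) ^ a + 3 * (1 / 2) ^ (5 - a) := by
  interval_cases a <;> norm_num

theorem every_fifth_row_covers (m n : ℕ) :
    let D : Fin (5 * m + 1) × Fin (2 * n + 1) → ℕ :=
      fun p => if p.1.val % 5 = 0 ∧ p.2.val % 2 = 0 then 3 else 0
    ∀ u : Fin (5 * m + 1) × Fin (2 * n + 1),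
      1 ≤ ∑ v, (D v : ℝ) * (1 / 2) ^ ((fgrid (5 * m + 1) (2 * n + 1)).dist u v) := by
  intro D u
  have hrows : ∀ i : Fin (5 * m + 1), i.val % 5 = 0 →
      ∀ j : Fin (2 * n + 1), Even j.val → 3 ≤ D (i, j) := by
    intro i hi j hj
    simp [D, hi, Nat.even_iff.1 hj]
  have hc : Odd (2 * n + 1) := odd_two_mul_add_one n
  obtain ⟨q, a, ha5, hu⟩ : ∃ q a, a < 5 ∧ u.1.val = 5 * q + a :=
    ⟨_, _, Nat.mod_lt _ (by norm_num), (Nat.div_add_mod _ 5).symm⟩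
  rcases Nat.eq_zero_or_pos a with rfl | ha0
  · have key := sum_three_mul_half_pow_le_weight u hc {u.1} (by simpa using hrows u.1 (by omega))
    simp only [sum_singleton, sub_self, Int.natAbs_zero, pow_zero, mul_one] at key
    linarith
  · have hu1 := u.1.isLt
    let below : Fin (5 * m + 1) := ⟨5 * q, by omega⟩
    let above : Fin (5 * m + 1) := ⟨5 * q + 5, by omega⟩
    have key := sum_three_mul_half_pow_le_weight u hc {below, above} (by
      simp only [mem_insert, mem_singleton]
      rintro i (rfl | rfl) <;> exact hrows _ (by simp [below, above]))
    rw [sum_pair (by simp [below, above, Fin.ext_iff])] at key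
    have hdist_below : ((u.1 : ℤ) - below).natAbs = a := by simp [below]; omega
    have hdist_above : ((u.1 : ℤ) - above).natAbs = 5 - a := by simp [above]; omega
    rw [hdist_below, hdist_above] at key
    exact (one_le_three_mul_half_pow_add ha0 ha5).trans key
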